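/- Let D be the second-order difference operator on ℝ^n and A the sampling matrix for a sample set M. A feasible profile z (i.e., Az = y) is a minimizer of min_z ‖Dz‖₁ subject to Az = y if and only if there exists u ∈ ℝ^{n-2} with (D^T)_{M^c} u = 0, u_I = sign(Dz)_I, and ‖u‖_∞ ≤ 1, where I is the support of Dz and M^c is the complement of M. -/
import Mathlib


open Matrix

/-- The (n-2)×n second-order difference operator: (Dz)_i = z_i - 2 z_{i+1} + z_{i+2}. -/
def Dmat (n : ℕ) : Matrix (Fin (n - 2)) (Fin n) ℝ :=
  fun i j =>
    if (j : ℕ) = (i : ℕ) then 1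
    else if (j : ℕ) = (i : ℕ) + 1 then -2
    else if (j : ℕ) = (i : ℕ) + 2 then 1
    else 0


lemma sign_abs_le' (x : ℝ) : |Real.sign x| ≤ 1 := by
  rcases lt_trichotomy x 0 with h | h | h
  · rw [Real.sign_of_neg h]; norm_num
  · rw [h, Real.sign_zero]; norm_num
  · rw [Real.sign_of_pos h]; norm_num

lemma sign_mul_self' (x : ℝ) : Real.sign x * x = |x| := by
  rcases lt_trichotomy x 0 with h | h | h
  · rw [Real.sign_of_neg h, abs_of_neg h]; ring
  · simp [h]
  · rw [Real.sign_of_pos h, abs_of_pos h]; ring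

lemma dot_swap' {m n : ℕ} (D : Matrix (Fin m) (Fin n) ℝ) (u : Fin m → ℝ) (v : Fin n → ℝ) :
    ∑ i, u i * D.mulVec v i = ∑ j, Dᵀ.mulVec u j * v j := by
  simp only [Matrix.mulVec, dotProduct, Matrix.transpose_apply, Finset.mul_sum, Finset.sum_mul]
  rw [Finset.sum_comm]
  exact Finset.sum_congr rfl fun j _ => Finset.sum_congr rfl fun i _ => by ring

lemma abs_add_sign' {x d : ℝ} (hx : x ≠ 0) (hd : |d| ≤ |x|) :
    |x + d| = |x| + Real.sign x * d := by
  rcases hx.lt_or_gt with h | h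
  · have h2 := (abs_le.mp (hd.trans_eq (abs_of_neg h))).2
    rw [Real.sign_of_neg h, abs_of_nonpos (by linarith), abs_of_neg h]; ring
  · have h1 := (abs_le.mp (hd.trans_eq (abs_of_pos h))).1
    rw [Real.sign_of_pos h, abs_of_nonneg (by linarith), abs_of_pos h]; ring

theorem l1_opt_iff {m n : ℕ} (D : Matrix (Fin m) (Fin n) ℝ) (M : Finset (Fin n))
    (y z : Fin n → ℝ) (hfeas : ∀ i ∈ M, z i = y i) :
    (∀ w : Fin n → ℝ, (∀ i ∈ M, w i = y i) →
        ∑ i, |D.mulVec z i| ≤ ∑ i, |D.mulVec w i|) ↔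
    ∃ u : Fin m → ℝ,
      (∀ j : Fin n, j ∉ M → Dᵀ.mulVec u j = 0) ∧
      (∀ i, D.mulVec z i ≠ 0 → u i = Real.sign (D.mulVec z i)) ∧
      (∀ i, |u i| ≤ 1) := by
  classical
  constructor
  · -- hard direction
    intro hopt
    by_contra hno
    set sg : Fin m → ℝ := fun i => Real.sign (D.mulVec z i) with hsg
    set t : Fin m → Set ℝ := fun i => if D.mulVec z i ≠ 0 then {sg i} else Set.Icc (-1) 1 with ht
    set U : Set (Fin m → ℝ) := Set.pi Set.univ t with hU
    have hUmem : ∀ u ∈ U, (∀ i, D.mulVec z i ≠ 0 → u i = sg i) ∧ (∀ i, |u i| ≤ 1) := by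
      intro u hu
      constructor
      · intro i hi
        have := hu i (Set.mem_univ i)
        simp only [ht, if_pos hi, Set.mem_singleton_iff] at this
        exact this
      · intro i
        have := hu i (Set.mem_univ i)
        by_cases hi : D.mulVec z i ≠ 0
        · simp only [ht, if_pos hi, Set.mem_singleton_iff] at this
          rw [this]; exact sign_abs_le' _
        · simp only [ht, if_neg hi, Set.mem_Icc] at this
          exact abs_le.mpr this
    have hUc : IsCompact U := isCompact_univ_pi (fun i => by
      by_cases hi : D.mulVec z i ≠ 0
      · simp only [ht, if_pos hi]; exact isCompact_singleton
      · simp only [ht, if_neg hi]; exact isCompact_Icc)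
    have hUconv : Convex ℝ U := convex_pi (fun i _ => by
      by_cases hi : D.mulVec z i ≠ 0
      · simp only [ht, if_pos hi]; exact convex_singleton _
      · simp only [ht, if_neg hi]; exact convex_Icc _ _)
    set L := Dᵀ.mulVecLin with hL
    have hLc : Continuous L := L.continuous_of_finiteDimensional
    set S : Set (Fin n → ℝ) := L '' U with hS
    have hSc : IsCompact S := hUc.image hLc
    have hSconv : Convex ℝ S := hUconv.linear_image L
    set W : Set (Fin n → ℝ) := {v | ∀ j ∉ M, v j = 0} with hW
    have hWclosed : IsClosed W := by
      have : W = ⋂ (j : Fin n) (_ : j ∉ M), {v : Fin n → ℝ | v j = 0} := by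
        ext v; simp [hW, Set.mem_iInter]
      rw [this]
      exact isClosed_iInter fun j => isClosed_iInter fun _ =>
        isClosed_eq (continuous_apply j) continuous_const
    have hWconv : Convex ℝ W := by
      intro v hv v' hv' a b _ _ _
      intro j hj
      simp [hv j hj, hv' j hj]
    have hdisj : Disjoint S W := by
      rw [Set.disjoint_left]
      rintro v ⟨u, hu, rfl⟩ hvW
      obtain ⟨h1, h2⟩ := hUmem u hu
      exact hno ⟨u, fun j hj => hvW j hj, h1, h2⟩
    obtain ⟨f, c, c', hfS, hcc', hfW⟩ :=
      geometric_hahn_banach_compact_closed hSconv hSc hWconv hWclosed hdisj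
    have hW0 : ∀ v ∈ W, f v = 0 := by
      intro v hv
      by_contra hne
      have hmem : ∀ r : ℝ, r • v ∈ W := fun r j hj => by simp [Pi.smul_apply, hv j hj]
      have h1 : c' < f (((c' - 1) / f v) • v) := hfW _ (hmem _)
      rw [f.map_smul, smul_eq_mul, div_mul_cancel₀ _ hne] at h1
      linarith
    have hc'neg : c' < 0 := by
      have h0 : (0 : Fin n → ℝ) ∈ W := fun j _ => rfl
      have := hfW 0 h0
      simpa using this
    set hvec : Fin n → ℝ := fun j => f (Pi.single j 1) with hhvec
    have hfrep : ∀ v : Fin n → ℝ, f v = ∑ j, v j * hvec j := by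
      intro v
      have hv : v = ∑ j, v j • (Pi.single j 1 : Fin n → ℝ) := by
        funext j'
        rw [Finset.sum_apply]
        simp [Pi.single_apply]
      calc f v = f (∑ j, v j • (Pi.single j 1 : Fin n → ℝ)) := by rw [← hv]
        _ = ∑ j, v j * hvec j := by
            rw [map_sum]
            exact Finset.sum_congr rfl fun j _ => by rw [f.map_smul, smul_eq_mul]
    have hhM : ∀ j ∈ M, hvec j = 0 := by
      intro j hj
      apply hW0
      intro j' hj'
      have : j' ≠ j := fun e => hj' (e ▸ hj)
      simp [Pi.single_apply, this]
    have hkey : ∀ u ∈ U, ∑ i, u i * D.mulVec hvec i < c := by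
      intro u hu
      have h1 := hfS (L u) ⟨u, hu, rfl⟩
      rw [hfrep] at h1
      rw [dot_swap']
      exact h1
    set us : Fin m → ℝ := fun i =>
      if D.mulVec z i ≠ 0 then sg i else Real.sign (D.mulVec hvec i) with hus
    have husU : us ∈ U := by
      intro i _
      by_cases hi : D.mulVec z i ≠ 0
      · simp only [ht, hus, if_pos hi, Set.mem_singleton_iff]
      · simp only [ht, hus, if_neg hi, Set.mem_Icc]
        exact abs_le.mp (sign_abs_le' _)
    have hneg : ∑ i, us i * D.mulVec hvec i < 0 := (hkey us husU).trans (hcc'.trans hc'neg)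
    -- choose step size
    set I : Finset (Fin m) := Finset.univ.filter (fun i => D.mulVec z i ≠ 0) with hI
    set g : Fin m → ℝ := fun i => |D.mulVec z i| / (|D.mulVec hvec i| + 1) with hg
    set tt : ℝ := if hIne : I.Nonempty then min 1 (I.inf' hIne g) else 1 with htt
    have hgpos : ∀ i ∈ I, 0 < g i := by
      intro i hi
      rw [hI, Finset.mem_filter] at hi
      exact div_pos (abs_pos.mpr hi.2) (by positivity)
    have httpos : 0 < tt := by
      rw [htt]
      split
      · rename_i hIne
        exact lt_min one_pos ((Finset.lt_inf'_iff hIne).mpr hgpos)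
      · exact one_pos
    have htbound : ∀ i, D.mulVec z i ≠ 0 → tt * |D.mulVec hvec i| ≤ |D.mulVec z i| := by
      intro i hi
      have hiI : i ∈ I := by rw [hI, Finset.mem_filter]; exact ⟨Finset.mem_univ i, hi⟩
      have h1 : tt ≤ g i := by
        rw [htt]
        split
        · exact (min_le_right _ _).trans (Finset.inf'_le g hiI)
        · rename_i hne; exact absurd ⟨i, hiI⟩ hne
      have h2 : tt * |D.mulVec hvec i| ≤ tt * (|D.mulVec hvec i| + 1) := by nlinarith [abs_nonneg (D.mulVec hvec i)]
      have h3 : tt * (|D.mulVec hvec i| + 1) ≤ g i * (|D.mulVec hvec i| + 1) := by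
        apply mul_le_mul_of_nonneg_right h1 (by positivity)
      have h4 : g i * (|D.mulVec hvec i| + 1) = |D.mulVec z i| := by
        rw [hg]; field_simp
      linarith
    -- the perturbed point
    have hwfeas : ∀ i ∈ M, (z + tt • hvec) i = y i := by
      intro i hi
      simp [Pi.add_apply, Pi.smul_apply, hfeas i hi, hhM i hi]
    have hDw : ∀ i, D.mulVec (z + tt • hvec) i = D.mulVec z i + tt * D.mulVec hvec i := by
      intro i
      rw [Matrix.mulVec_add, Matrix.mulVec_smul]
      rfl
    have hpt : ∀ i, |D.mulVec (z + tt • hvec) i|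
        = |D.mulVec z i| + tt * (us i * D.mulVec hvec i) := by
      intro i
      rw [hDw i]
      by_cases hi : D.mulVec z i = 0
      · rw [hi]
        simp only [hus, hi, ne_eq, not_true_eq_false, if_false, zero_add, abs_zero]
        rw [abs_mul, abs_of_pos httpos, ← sign_mul_self' (D.mulVec hvec i)]
      · have hd : |tt * D.mulVec hvec i| ≤ |D.mulVec z i| := by
          rw [abs_mul, abs_of_pos httpos]; exact htbound i hi
        rw [abs_add_sign' hi hd]
        simp only [hus, hi, ne_eq, not_false_eq_true, if_true, hsg]
        ring
    have hfinal := hopt (z + tt • hvec) hwfeas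
    have hsum : ∑ i, |D.mulVec (z + tt • hvec) i|
        = (∑ i, |D.mulVec z i|) + tt * ∑ i, us i * D.mulVec hvec i := by
      rw [Finset.mul_sum, ← Finset.sum_add_distrib]
      exact Finset.sum_congr rfl fun i _ => hpt i
    rw [hsum] at hfinal
    nlinarith
  · rintro ⟨u, hu0, husgn, hub⟩ w hw
    have step1 : ∑ i, |D.mulVec z i| = ∑ i, u i * D.mulVec z i := by
      apply Finset.sum_congr rfl
      intro i _
      by_cases hi : D.mulVec z i = 0
      · simp [hi]
      · rw [husgn i hi, sign_mul_self']
    have step2 : ∑ j, Dᵀ.mulVec u j * z j = ∑ j, Dᵀ.mulVec u j * w j := by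
      apply Finset.sum_congr rfl
      intro j _
      by_cases hj : j ∈ M
      · rw [hfeas j hj, hw j hj]
      · rw [hu0 j hj]; ring
    have step3 : ∑ i, u i * D.mulVec w i ≤ ∑ i, |D.mulVec w i| := by
      apply Finset.sum_le_sum
      intro i _
      calc u i * D.mulVec w i ≤ |u i * D.mulVec w i| := le_abs_self _
        _ = |u i| * |D.mulVec w i| := abs_mul _ _
        _ ≤ 1 * |D.mulVec w i| := mul_le_mul_of_nonneg_right (hub i) (abs_nonneg _)
        _ = |D.mulVec w i| := one_mul _
    calc ∑ i, |D.mulVec z i| = ∑ i, u i * D.mulVec z i := step1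
      _ = ∑ j, Dᵀ.mulVec u j * z j := dot_swap' D u z
      _ = ∑ j, Dᵀ.mulVec u j * w j := step2
      _ = ∑ i, u i * D.mulVec w i := (dot_swap' D u w).symm
      _ ≤ ∑ i, |D.mulVec w i| := step3

/-- Optimality condition for min ‖Dz‖₁ s.t. z_M = y_M: a feasible z is a minimizer iff
    there is u with (Dᵀ)_{Mᶜ} u = 0, u_I = sign(Dz)_I and ‖u‖_∞ ≤ 1. -/
theorem stmt7 (n : ℕ) (M : Finset (Fin n)) (y : Fin n → ℝ) (z : Fin n → ℝ)
    (hfeas : ∀ i ∈ M, z i = y i) :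
    (∀ w : Fin n → ℝ, (∀ i ∈ M, w i = y i) →
        ∑ i, |(Dmat n).mulVec z i| ≤ ∑ i, |(Dmat n).mulVec w i|) ↔
    ∃ u : Fin (n - 2) → ℝ,
      (∀ j : Fin n, j ∉ M → (Dmat n)ᵀ.mulVec u j = 0) ∧
      (∀ i, (Dmat n).mulVec z i ≠ 0 → u i = Real.sign ((Dmat n).mulVec z i)) ∧
      (∀ i, |u i| ≤ 1) := l1_opt_iff (Dmat n) M y z hfeas
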